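/- arXiv:2406.12001 — 2 statements merged into one kernel-verified Lean document; each statement's English description precedes it below -/
import Mathlib

section
/- Let q be a positive semidefinite symmetric bilinear form on a real vector space V. Then for each d ≥ 1 the induced symmetric bilinear form on the d-th symmetric power Symᵈ(V), determined on decomposable elements by qᵈ(v₁⊙⋯⊙v_d, w₁⊙⋯⊙w_d) = Σ_{σ ∈ S_d} ∏ᵢ q(vᵢ, w_{σ(i)}), is positive semidefinite. -/
private lemma aux_sum_comm3 {α β γ M : Type*} [Fintype α] [Fintype β] [Fintype γ]
    [AddCommMonoid M] (f : α → β → γ → M) :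
    ∑ a, ∑ b, ∑ c, f a b c = ∑ c, ∑ a, ∑ b, f a b c := by
  calc ∑ a, ∑ b, ∑ c, f a b c
      = ∑ a, ∑ c, ∑ b, f a b c :=
        Finset.sum_congr rfl fun a _ => Finset.sum_comm
    _ = ∑ c, ∑ a, ∑ b, f a b c := Finset.sum_comm

private lemma aux_sum_comm4 {α β γ δ M : Type*} [Fintype α] [Fintype β] [Fintype γ] [Fintype δ]
    [AddCommMonoid M] (f : α → β → γ → δ → M) :
    ∑ a, ∑ b, ∑ c, ∑ e, f a b c e = ∑ c, ∑ e, ∑ a, ∑ b, f a b c e := by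
  calc ∑ a, ∑ b, ∑ c, ∑ e, f a b c e
      = ∑ c, ∑ a, ∑ b, ∑ e, f a b c e := aux_sum_comm3 _
    _ = ∑ c, ∑ e, ∑ a, ∑ b, f a b c e :=
        Finset.sum_congr rfl fun c _ => aux_sum_comm3 _

/-- If `q` is a positive semidefinite symmetric bilinear form on a real vector
space `V`, then for each `d ≥ 1` the induced bilinear form on the `d`-th symmetric power,
given on decomposables by `qᵈ(v₁⊙⋯⊙v_d, w₁⊙⋯⊙w_d) = Σ_{σ ∈ S_d} ∏ᵢ q(vᵢ, w_{σ(i)})`, is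
positive semidefinite: its quadratic form is nonnegative on every finite linear combination
of decomposable elements. -/
theorem stmt4 {V : Type*} [AddCommGroup V] [Module ℝ V]
    (q : V →ₗ[ℝ] V →ₗ[ℝ] ℝ)
    (hsymm : ∀ v w, q v w = q w v)
    (hpos : ∀ v, 0 ≤ q v v)
    (d : ℕ) (hd : 1 ≤ d) :
    ∀ (n : ℕ) (c : Fin n → ℝ) (v : Fin n → Fin d → V),
      0 ≤ ∑ i, ∑ j, c i * c j *
        ∑ σ : Equiv.Perm (Fin d), ∏ k, q (v i k) (v j (σ k)) := by
  intro n c v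
  classical
  set ι := Fin n × Fin d with hι
  let A : Matrix ι ι ℝ := fun a b => q (v a.1 a.2) (v b.1 b.2)
  -- the Gram matrix is positive semidefinite
  have hA : A.PosSemidef := by
    refine Matrix.PosSemidef.of_dotProduct_mulVec_nonneg ?_ ?_
    · ext a b
      simp only [Matrix.conjTranspose_apply, star, A]
      exact hsymm _ _
    · intro x
      have hx : dotProduct (star x) (A.mulVec x)
          = q (∑ a, x a • v a.1 a.2) (∑ b, x b • v b.1 b.2) := by
        simp only [dotProduct, Matrix.mulVec, map_sum, map_smul,
          LinearMap.sum_apply, LinearMap.smul_apply, smul_eq_mul, Finset.mul_sum,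
          star_trivial, Finset.sum_mul]
        refine Finset.sum_congr rfl fun a _ => Finset.sum_congr rfl fun b _ => ?_
        show x a * (q (v a.1 a.2) (v b.1 b.2) * x b)
          = x a * (x b * q (v b.1 b.2) (v a.1 a.2))
        rw [hsymm (v b.1 b.2) (v a.1 a.2)]
        ring
      rw [hx]
      exact hpos _
  obtain ⟨B, hB⟩ : ∃ B : Matrix ι ι ℝ, A = B.conjTranspose * B := by
    open scoped MatrixOrder in
    obtain ⟨X, hX, -, hXA⟩ := CFC.exists_sqrt_of_isSelfAdjoint_of_quasispectrumRestricts hA.isHermitian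
      (QuasispectrumRestricts.nnreal_of_nonneg hA.nonneg)
    refine ⟨X, ?_⟩
    have hXc : X.conjTranspose = X := hX.star_eq
    rw [hXc]
    exact hXA.symm
  have hAB : ∀ a b : ι, A a b = ∑ m, B m a * B m b := by
    intro a b
    rw [hB]
    simp [Matrix.mul_apply, Matrix.conjTranspose_apply, mul_comm]
  -- `F g` is the coefficient functional
  set F : (Fin d → ι) → ℝ := fun g => ∑ i, c i * ∏ k, B (g k) (i, k) with hF
  -- rewrite the quadratic form
  have main : (∑ i, ∑ j, c i * c j *
        ∑ σ : Equiv.Perm (Fin d), ∏ k, q (v i k) (v j (σ k)))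
      = ∑ σ : Equiv.Perm (Fin d), ∑ g : Fin d → ι, F g * F (g ∘ σ) := by
    have step1 : ∀ (i j : Fin n) (σ : Equiv.Perm (Fin d)),
        (∏ k, q (v i k) (v j (σ k)))
          = ∑ g : Fin d → ι, (∏ k, B (g k) (i, k)) * (∏ k, B (g k) (j, σ k)) := by
      intro i j σ
      have h1 : (∏ k, q (v i k) (v j (σ k)))
          = ∏ k, ∑ m : ι, B m (i, k) * B m (j, σ k) := by
        refine Finset.prod_congr rfl fun k _ => ?_
        exact hAB (i, k) (j, σ k)
      rw [h1, Finset.prod_univ_sum (fun _ => (Finset.univ : Finset ι))]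
      rw [Fintype.piFinset_univ]
      refine Finset.sum_congr rfl fun g _ => ?_
      rw [Finset.prod_mul_distrib]
    calc (∑ i, ∑ j, c i * c j *
            ∑ σ : Equiv.Perm (Fin d), ∏ k, q (v i k) (v j (σ k)))
        = ∑ σ : Equiv.Perm (Fin d), ∑ g : Fin d → ι,
            (∑ i, c i * ∏ k, B (g k) (i, k)) * (∑ j, c j * ∏ k, B (g k) (j, σ k)) := by
          simp_rw [step1, Finset.mul_sum]
          rw [aux_sum_comm4]
          refine Finset.sum_congr rfl fun σ _ => Finset.sum_congr rfl fun g _ => ?_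
          rw [Finset.sum_comm]
          refine Finset.sum_congr rfl fun j _ => ?_
          rw [Finset.sum_mul]
          refine Finset.sum_congr rfl fun i _ => ?_
          ring
      _ = ∑ σ : Equiv.Perm (Fin d), ∑ g : Fin d → ι, F g * F (g ∘ ⇑σ⁻¹) := by
          refine Finset.sum_congr rfl fun σ _ => Finset.sum_congr rfl fun g _ => ?_
          congr 1
          refine Finset.sum_congr rfl fun j _ => ?_
          congr 1
          have := Equiv.prod_comp σ (fun k => B (g (σ⁻¹ k)) (j, k))
          simp only [Equiv.symm_apply_apply, Equiv.Perm.coe_inv] at this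
          rw [this]
          rfl
      _ = ∑ σ : Equiv.Perm (Fin d), ∑ g : Fin d → ι, F g * F (g ∘ σ) := by
          exact Equiv.sum_comp (Equiv.inv (Equiv.Perm (Fin d)))
            (fun σ => ∑ g : Fin d → ι, F g * F (g ∘ σ))
  rw [main]
  -- now show the symmetrized sum is nonnegative
  set S := ∑ σ : Equiv.Perm (Fin d), ∑ g : Fin d → ι, F g * F (g ∘ σ) with hS
  have key : (d.factorial : ℝ) * S = ∑ g : Fin d → ι, (∑ τ : Equiv.Perm (Fin d), F (g ∘ τ)) ^ 2 := by
    have hcard : (Finset.univ : Finset (Equiv.Perm (Fin d))).card = d.factorial := by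
      rw [Finset.card_univ, Fintype.card_perm, Fintype.card_fin]
    calc (d.factorial : ℝ) * S = ∑ _τ : Equiv.Perm (Fin d), S := by
          rw [Finset.sum_const, hcard, nsmul_eq_mul]
      _ = ∑ τ : Equiv.Perm (Fin d), ∑ σ : Equiv.Perm (Fin d), ∑ g : Fin d → ι,
            F (g ∘ τ) * F (g ∘ τ ∘ σ) := by
          refine Finset.sum_congr rfl fun τ _ => ?_
          rw [hS]
          refine Finset.sum_congr rfl fun σ _ => ?_
          have hcomp := Equiv.sum_comp (Equiv.arrowCongr τ.symm (Equiv.refl ι))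
            (fun g : Fin d → ι => F g * F (g ∘ σ))
          rw [← hcomp]
          refine Finset.sum_congr rfl fun g _ => ?_
          have he : (Equiv.arrowCongr τ.symm (Equiv.refl ι)) g = g ∘ τ := by
            funext k
            simp [Equiv.arrowCongr]
          rw [he]
          rfl
      _ = ∑ g : Fin d → ι, (∑ τ : Equiv.Perm (Fin d), F (g ∘ τ)) ^ 2 := by
          rw [aux_sum_comm3]
          refine Finset.sum_congr rfl fun g _ => ?_
          rw [sq, Finset.sum_mul]
          refine Finset.sum_congr rfl fun τ _ => ?_
          rw [Finset.mul_sum]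
          have hml := Equiv.sum_comp (Equiv.mulLeft τ)
            (fun ρ : Equiv.Perm (Fin d) => F (g ∘ τ) * F (g ∘ ρ))
          rw [← hml]
          refine Finset.sum_congr rfl fun σ _ => ?_
          have hco : g ∘ ⇑τ ∘ ⇑σ = g ∘ ⇑(Equiv.mulLeft τ σ) := by
            funext k
            simp [Equiv.Perm.mul_apply]
          rw [hco]
  have hsq : 0 ≤ ∑ g : Fin d → ι, (∑ τ : Equiv.Perm (Fin d), F (g ∘ τ)) ^ 2 :=
    Finset.sum_nonneg fun g _ => sq_nonneg _
  rw [← key] at hsq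
  have hfac : (0:ℝ) < d.factorial := by
    exact_mod_cast Nat.factorial_pos d
  nlinarith [hsq, hfac]
end

section
/- Let H be a real Hilbert space and L : H → H a symmetric positive semidefinite bounded operator. For each k, let Symᵏ(L) denote the induced operator on the k-th symmetric tensor power of H. Then for every polynomial element P in the symmetric algebra Sym*(H), one has ⟨P, (Σ_{k=0}^{∞} (1/k!) Symᵏ L) P⟩ ≥ 0, where the inner product is the one induced on Sym*(H) by the inner product of H. -/
open scoped InnerProductSpace

/-- The pairing between decomposable elements of symmetric tensor powers of `H` induced by
the inner product of `H` and the operator `Σ_k (1/k!) Symᵏ L`: degree-`d` and degree-`d'`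
components are orthogonal, and in equal degrees the pairing is
`(1/d!) Σ_{σ ∈ S_d} ∏ᵢ ⟪vᵢ, L w_{σ(i)}⟫`. -/
noncomputable def symLPairing {H : Type*} [NormedAddCommGroup H] [InnerProductSpace ℝ H]
    (L : H →L[ℝ] H) {d d' : ℕ} (v : Fin d → H) (w : Fin d' → H) : ℝ :=
  if h : d = d' then
    ((d.factorial : ℝ))⁻¹ *
      ∑ σ : Equiv.Perm (Fin d), ∏ k, ⟪v k, L (w (Fin.cast h (σ k)))⟫_ℝ
  else 0

/-- Auxiliary "symmetrized monomial" function. -/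
noncomputable def phiAux {d : ℕ} {α : Type*} [Fintype α] (x : Fin d → α → ℝ)
    (f : Fin d → α) : ℝ :=
  ∑ σ : Equiv.Perm (Fin d), ∏ k, x k (f (σ k))

lemma phiAux_comp_perm {d : ℕ} {α : Type*} [Fintype α] (x : Fin d → α → ℝ)
    (f : Fin d → α) (τ : Equiv.Perm (Fin d)) : phiAux x (f ∘ τ) = phiAux x f := by
  unfold phiAux
  rw [← Equiv.sum_comp (Equiv.mulLeft τ) (fun σ : Equiv.Perm (Fin d) => ∏ k, x k (f (σ k)))]
  refine Finset.sum_congr rfl fun σ _ => Finset.prod_congr rfl fun k _ => ?_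
  simp [Equiv.Perm.mul_apply]

lemma lemB {d : ℕ} {α : Type*} [Fintype α] [DecidableEq α] (x y : Fin d → α → ℝ) :
    ∑ f : Fin d → α, phiAux x f * phiAux y f
      = (d.factorial : ℝ) * ∑ σ : Equiv.Perm (Fin d), ∏ k, ∑ t, x k t * y (σ k) t := by
  have hR : ∀ σ : Equiv.Perm (Fin d),
      (∏ k, ∑ t, x k t * y (σ k) t)
        = ∑ f : Fin d → α, (∏ k, x k (f k)) * ∏ k, y (σ k) (f k) := by
    intro σ
    rw [Finset.prod_univ_sum]
    exact Finset.sum_congr rfl fun f _ => by rw [Finset.prod_mul_distrib]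
  have hRHS : ∑ σ : Equiv.Perm (Fin d), ∏ k, ∑ t, x k t * y (σ k) t
      = ∑ f : Fin d → α, (∏ k, x k (f k)) * phiAux y f := by
    simp_rw [hR]
    rw [Finset.sum_comm]
    refine Finset.sum_congr rfl fun f _ => ?_
    unfold phiAux
    rw [Finset.mul_sum]
    rw [← Equiv.sum_comp (Equiv.inv (Equiv.Perm (Fin d)))
      (fun σ : Equiv.Perm (Fin d) => (∏ k, x k (f k)) * ∏ k, y k (f (σ k)))]
    refine Finset.sum_congr rfl fun σ _ => ?_
    congr 1
    rw [← Equiv.prod_comp σ (fun k => y k (f ((Equiv.inv (Equiv.Perm (Fin d)) σ) k)))]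
    refine Finset.prod_congr rfl fun k _ => ?_
    simp
  rw [hRHS]
  have hτ : ∀ τ : Equiv.Perm (Fin d),
      ∑ f : Fin d → α, (∏ k, x k (f (τ k))) * phiAux y f
        = ∑ f : Fin d → α, (∏ k, x k (f k)) * phiAux y f := by
    intro τ
    rw [← Equiv.sum_comp (Equiv.arrowCongr τ (Equiv.refl α))
      (fun f : Fin d → α => (∏ k, x k (f (τ k))) * phiAux y f)]
    refine Finset.sum_congr rfl fun f _ => ?_
    have h1 : (Equiv.arrowCongr τ (Equiv.refl α)) f = f ∘ τ.symm := by
      funext k; simp [Equiv.arrowCongr]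
    rw [h1]
    rw [phiAux_comp_perm y f τ.symm]
    congr 1
    refine Finset.prod_congr rfl fun k _ => ?_
    simp
  calc ∑ f : Fin d → α, phiAux x f * phiAux y f
      = ∑ f : Fin d → α, ∑ τ : Equiv.Perm (Fin d),
          (∏ k, x k (f (τ k))) * phiAux y f := by
        refine Finset.sum_congr rfl fun f _ => ?_
        unfold phiAux
        rw [Finset.sum_mul]
    _ = ∑ τ : Equiv.Perm (Fin d), ∑ f : Fin d → α,
          (∏ k, x k (f (τ k))) * phiAux y f := Finset.sum_comm
    _ = ∑ _τ : Equiv.Perm (Fin d), ∑ f : Fin d → α,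
          (∏ k, x k (f k)) * phiAux y f := Finset.sum_congr rfl fun τ _ => hτ τ
    _ = (d.factorial : ℝ) * ∑ f : Fin d → α, (∏ k, x k (f k)) * phiAux y f := by
        rw [Finset.sum_const, Finset.card_univ, Fintype.card_perm, Fintype.card_fin,
          nsmul_eq_mul]

lemma gram_decomp {H : Type*} [NormedAddCommGroup H] [InnerProductSpace ℝ H]
    (L : H →L[ℝ] H)
    (hsym : ∀ x y, ⟪L x, y⟫_ℝ = ⟪x, L y⟫_ℝ)
    (hpos : ∀ x, 0 ≤ ⟪x, L x⟫_ℝ)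
    {ι : Type*} [Fintype ι] [DecidableEq ι] (u : ι → H) :
    ∃ φ : ι → ι → ℝ, ∀ a b, ⟪u a, L (u b)⟫_ℝ = ∑ t, φ a t * φ b t := by
  set M : Matrix ι ι ℝ := Matrix.of fun a b => ⟪u a, L (u b)⟫_ℝ with hM
  have hPSD : M.PosSemidef := by
    refine Matrix.PosSemidef.of_dotProduct_mulVec_nonneg ?_ ?_
    · ext a b
      simp only [Matrix.conjTranspose_apply, hM, Matrix.of_apply, star_trivial]
      rw [real_inner_comm, hsym]
    · intro z
      have h1 : dotProduct (star z) (M.mulVec z)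
          = ⟪∑ a, z a • u a, L (∑ b, z b • u b)⟫_ℝ := by
        simp only [dotProduct, Matrix.mulVec, star_trivial, hM, Matrix.of_apply,
          map_sum, map_smul, inner_sum, sum_inner, real_inner_smul_left,
          real_inner_smul_right, Finset.mul_sum]
        rw [Finset.sum_comm]
        exact Finset.sum_congr rfl fun a _ =>
          Finset.sum_congr rfl fun b _ => by ring
      rw [h1]
      exact hpos _
  obtain ⟨B, hB⟩ : ∃ B : Matrix ι ι ℝ, M = B.conjTranspose * B := by
    open scoped MatrixOrder in
    simpa [Matrix.star_eq_conjTranspose] using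
      CStarAlgebra.nonneg_iff_eq_star_mul_self.mp hPSD.nonneg
  refine ⟨fun a t => B t a, fun a b => ?_⟩
  calc ⟪u a, L (u b)⟫_ℝ = M a b := rfl
    _ = (B.conjTranspose * B) a b := by rw [← hB]
    _ = ∑ t, B t a * B t b := by
        rw [Matrix.mul_apply]
        exact Finset.sum_congr rfl fun t _ => by
          simp [Matrix.conjTranspose_apply]

lemma lemE {ι : Type*} [Fintype ι] [DecidableEq ι] {d d' : ℕ} (h : d = d')
    (x : Fin d → ι → ℝ) (y : Fin d' → ι → ℝ) :
    ((d.factorial : ℝ))⁻¹ *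
        ∑ σ : Equiv.Perm (Fin d), ∏ k, ∑ t, x k t * y (Fin.cast h (σ k)) t
      = ∑ f : Fin d → ι,
          (((d.factorial : ℝ))⁻¹ * phiAux x f) *
            (((d'.factorial : ℝ))⁻¹ * phiAux y (f ∘ Fin.cast h.symm)) := by
  subst h
  have hfac : (d.factorial : ℝ) ≠ 0 := Nat.cast_ne_zero.2 (Nat.factorial_ne_zero d)
  simp only [Fin.cast_refl, Function.comp_id, id_eq]
  have : ∑ f : Fin d → ι,
      (((d.factorial : ℝ))⁻¹ * phiAux x f) * (((d.factorial : ℝ))⁻¹ * phiAux y f)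
      = ((d.factorial : ℝ))⁻¹ * ((d.factorial : ℝ))⁻¹ *
          ∑ f : Fin d → ι, phiAux x f * phiAux y f := by
    rw [Finset.mul_sum]
    exact Finset.sum_congr rfl fun f _ => by ring
  rw [this, lemB x y]
  field_simp

/-- The component of a decomposable symmetric tensor in degree `d`, expressed in the
"coordinates" `φ`. -/
noncomputable def PsiAux {n : ℕ} (deg : Fin n → ℕ)
    (φ : ((i : Fin n) × Fin (deg i)) → ((i : Fin n) × Fin (deg i)) → ℝ)
    (d : ℕ) (i : Fin n) (f : Fin d → (i : Fin n) × Fin (deg i)) : ℝ :=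
  if h : deg i = d then
    ((d.factorial : ℝ))⁻¹ * phiAux (fun k => φ ⟨i, k⟩) (f ∘ Fin.cast h)
  else 0

lemma PsiAux_pos {n : ℕ} (deg : Fin n → ℕ)
    (φ : ((i : Fin n) × Fin (deg i)) → ((i : Fin n) × Fin (deg i)) → ℝ)
    {d : ℕ} {i : Fin n} (h : deg i = d) (f : Fin d → (i : Fin n) × Fin (deg i)) :
    PsiAux deg φ d i f
      = ((d.factorial : ℝ))⁻¹ * phiAux (fun k => φ ⟨i, k⟩) (f ∘ Fin.cast h) := by
  unfold PsiAux
  rw [dif_pos h]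

lemma PsiAux_neg {n : ℕ} (deg : Fin n → ℕ)
    (φ : ((i : Fin n) × Fin (deg i)) → ((i : Fin n) × Fin (deg i)) → ℝ)
    {d : ℕ} {i : Fin n} (h : deg i ≠ d) (f : Fin d → (i : Fin n) × Fin (deg i)) :
    PsiAux deg φ d i f = 0 := by
  unfold PsiAux
  rw [dif_neg h]

/-- For a symmetric positive semidefinite bounded operator `L` on a real
Hilbert space `H`, one has `⟨P, (Σ_k (1/k!) Symᵏ L) P⟩ ≥ 0` for every polynomial element
`P` of the symmetric algebra `Sym*(H)`, i.e. every finite linear combination of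
decomposable symmetric tensors (of arbitrary degrees). -/
theorem stmt5 {H : Type*} [NormedAddCommGroup H] [InnerProductSpace ℝ H] [CompleteSpace H]
    (L : H →L[ℝ] H)
    (hsym : ∀ x y, ⟪L x, y⟫_ℝ = ⟪x, L y⟫_ℝ)
    (hpos : ∀ x, 0 ≤ ⟪x, L x⟫_ℝ) :
    ∀ (n : ℕ) (deg : Fin n → ℕ) (c : Fin n → ℝ) (v : (i : Fin n) → Fin (deg i) → H),
      0 ≤ ∑ i, ∑ j, c i * c j * symLPairing L (v i) (v j) := by
  intro n deg c v
  classical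
  obtain ⟨φ, hφ⟩ := gram_decomp L hsym hpos
    (fun p : (i : Fin n) × Fin (deg i) => v p.1 p.2)
  set T : Finset ℕ := Finset.image deg Finset.univ with hT
  have key : ∀ i j, symLPairing L (v i) (v j)
      = ∑ d ∈ T, ∑ f : Fin d → ((i : Fin n) × Fin (deg i)),
          PsiAux deg φ d i f * PsiAux deg φ d j f := by
    intro i j
    by_cases h : deg i = deg j
    · have hL : symLPairing L (v i) (v j)
          = ((deg i).factorial : ℝ)⁻¹ *
              ∑ σ : Equiv.Perm (Fin (deg i)), ∏ k,
                ∑ t, φ ⟨i, k⟩ t * φ ⟨j, Fin.cast h (σ k)⟩ t := by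
        rw [symLPairing, dif_pos h]
        congr 1
        refine Finset.sum_congr rfl fun σ _ => Finset.prod_congr rfl fun k _ => ?_
        exact hφ ⟨i, k⟩ ⟨j, Fin.cast h (σ k)⟩
      rw [hL, lemE h (fun k => φ ⟨i, k⟩) (fun l => φ ⟨j, l⟩)]
      rw [Finset.sum_eq_single_of_mem (deg i)
        (Finset.mem_image_of_mem deg (Finset.mem_univ i))
        (fun d _ hne => Finset.sum_eq_zero fun f _ => by
          rw [PsiAux_neg deg φ (Ne.symm hne), zero_mul])]
      refine Finset.sum_congr rfl fun f _ => ?_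
      rw [PsiAux_pos deg φ rfl, PsiAux_pos deg φ h.symm]
      have h1 : f ∘ Fin.cast (rfl : deg i = deg i) = f := rfl
      rw [h1, show ((deg j).factorial : ℝ) = ((deg i).factorial : ℝ) by rw [h]]
    · rw [symLPairing, dif_neg h]
      symm
      refine Finset.sum_eq_zero fun d _ => Finset.sum_eq_zero fun f _ => ?_
      rcases eq_or_ne (deg i) d with hd | hd
      · rw [PsiAux_neg deg φ (show deg j ≠ d from fun hh => h (hd.trans hh.symm)), mul_zero]
      · rw [PsiAux_neg deg φ hd, zero_mul]
  have main : ∑ i, ∑ j, c i * c j * symLPairing L (v i) (v j)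
      = ∑ p ∈ T.sigma (fun d => (Finset.univ : Finset (Fin d → ((i : Fin n) × Fin (deg i))))),
          (∑ i, c i * PsiAux deg φ p.1 i p.2) ^ 2 := by
    calc ∑ i, ∑ j, c i * c j * symLPairing L (v i) (v j)
        = ∑ i, ∑ j,
            ∑ p ∈ T.sigma (fun d => (Finset.univ : Finset (Fin d → ((i : Fin n) × Fin (deg i))))),
            (c i * PsiAux deg φ p.1 i p.2) * (c j * PsiAux deg φ p.1 j p.2) := by
          refine Finset.sum_congr rfl fun i _ => Finset.sum_congr rfl fun j _ => ?_
          rw [key i j]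
          rw [show (c i * c j * ∑ d ∈ T, ∑ f : Fin d → ((i : Fin n) × Fin (deg i)),
              PsiAux deg φ d i f * PsiAux deg φ d j f)
              = ∑ d ∈ T, ∑ f : Fin d → ((i : Fin n) × Fin (deg i)),
                (c i * PsiAux deg φ d i f) * (c j * PsiAux deg φ d j f) by
            rw [Finset.mul_sum]
            refine Finset.sum_congr rfl fun d _ => ?_
            rw [Finset.mul_sum]
            exact Finset.sum_congr rfl fun f _ => by ring]
          rw [Finset.sum_sigma']
      _ = ∑ i, ∑ p ∈ T.sigma (fun d => (Finset.univ : Finset (Fin d → ((i : Fin n) × Fin (deg i))))),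
            ∑ j, (c i * PsiAux deg φ p.1 i p.2) * (c j * PsiAux deg φ p.1 j p.2) :=
          Finset.sum_congr rfl fun i _ => Finset.sum_comm
      _ = ∑ p ∈ T.sigma (fun d => (Finset.univ : Finset (Fin d → ((i : Fin n) × Fin (deg i))))),
            ∑ i, ∑ j, (c i * PsiAux deg φ p.1 i p.2) * (c j * PsiAux deg φ p.1 j p.2) :=
          Finset.sum_comm
      _ = ∑ p ∈ T.sigma (fun d => (Finset.univ : Finset (Fin d → ((i : Fin n) × Fin (deg i))))),
            (∑ i, c i * PsiAux deg φ p.1 i p.2) ^ 2 := by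
          refine Finset.sum_congr rfl fun p _ => ?_
          rw [sq, Finset.sum_mul_sum]
  rw [main]
  exact Finset.sum_nonneg fun p _ => sq_nonneg _
end
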